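/- arXiv:2309.04365 — 2 statements merged into one kernel-verified Lean document; each statement's English description precedes it below -/
import Mathlib

section
/- Let X be a real Hilbert space, w ∈ X, l > 0, and define θ : X → ℝ by θ(v) = 2l − (w, v)_X; set K = {v ∈ X : θ(v) ≥ 0} and K''' = {v ∈ X : θ(v) = 2l}. Let A : X → X satisfy (Au − Av, u − v)_X ≥ m‖u − v‖_X² and ‖Au − Av‖_X ≤ M‖u − v‖_X for all u, v ∈ X, with m, M > 0. Let p : ℝ → ℝ be Lipschitz with constant L_p > 0 and assume m > L_p‖w‖_X²; define j(u, v) = −p(θ(u)) θ(v). Let q : ℝ → ℝ be Lipschitz continuous, satisfy (q(r₁) − q(r₂))(r₁ − r₂) ≤ 0 for all r₁, r₂ ∈ ℝ, q(r) ≥ 0 for r ≤ 2l, q(r) ≤ 0 for r ≥ 2l, and q(r) = 0 if and only if r = 2l; define G : X → X by Gu = q(θ(u)) w. Let f ∈ X and let {λ_n} be positive reals with λ_n → 0. Then for each n there exists a unique u_n ∈ K with (Au_n, v − u_n)_X + (1/λ_n)(Gu_n, v − u_n)_X + j(u_n, v) − j(u_n, u_n) ≥ (f, v − u_n)_X for all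 v ∈ K, there exists a unique u''' ∈ K''' with (Au''', v − u''')_X + j(u''', v) − j(u''', u''') ≥ (f, v − u''')_X for all v ∈ K''', and u_n → u''' strongly in X as n → ∞. -/
open scoped InnerProductSpace
open Filter Topology

/-!
Both problems are variational inequalities for strongly monotone Lipschitz operators on closed
convex sets, solved by Lions–Stampacchia: the spring reaction `p` and the penalty `q` perturb `A`
only along `w`, and `Lp ‖w‖² < m` keeps the perturbed operator strongly monotone.

For the convergence, the rigid constraint set is the hyperplane `w^⊥`, so `A u' - f = α w` for
some `α`. Testing the penalized inequality with `v = u'` gives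
`(1/λₙ) q(θ uₙ) (2l - θ uₙ) + (m - Lp ‖w‖²) ‖uₙ - u'‖² ≤ (α + p(2l)) (θ uₙ - 2l)`,
where the first term is nonnegative since `q` is antitone with `q(2l) = 0`. Hence `uₙ` is bounded,
the penalty term is `O(λₙ)`, so `θ uₙ → 2l` because `q` vanishes only at `2l`, and then the right
side tends to `0`, forcing `uₙ → u'`.
-/

section VariationalInequality

variable {X : Type*} [NormedAddCommGroup X] [InnerProductSpace ℝ X]

theorem exists_inner_sub_le_zero_of_isClosed_convex [CompleteSpace X] {K : Set X}
    (hne : K.Nonempty) (hcl : IsClosed K) (hconv : Convex ℝ K) (x : X) :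
    ∃ y ∈ K, ∀ z ∈ K, ⟪x - y, z - y⟫_ℝ ≤ 0 := by
  obtain ⟨y, hy, hmin⟩ := exists_norm_eq_iInf_of_complete_convex hne hcl.isComplete hconv x
  exact ⟨y, hy, (norm_eq_iInf_iff_real_inner_le_zero hconv hy).1 hmin⟩

theorem norm_sub_le_of_inner_sub_le_zero {x₁ x₂ y₁ y₂ : X}
    (h₁ : ⟪x₁ - y₁, y₂ - y₁⟫_ℝ ≤ 0) (h₂ : ⟪x₂ - y₂, y₁ - y₂⟫_ℝ ≤ 0) :
    ‖y₁ - y₂‖ ≤ ‖x₁ - x₂‖ := by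
  have hsq : ‖y₁ - y₂‖ ^ 2 ≤ ⟪x₁ - x₂, y₁ - y₂⟫_ℝ := by
    rw [← neg_sub y₁ y₂, inner_neg_right] at h₁
    rw [show x₁ - x₂ = (x₁ - y₁) - (x₂ - y₂) + (y₁ - y₂) by abel, inner_add_left,
      inner_sub_left, real_inner_self_eq_norm_sq]
    linarith
  nlinarith [real_inner_le_norm (x₁ - x₂) (y₁ - y₂), norm_nonneg (y₁ - y₂), norm_nonneg (x₁ - x₂)]

theorem lipschitzWith_one_of_inner_sub_le_zero {K : Set X} {P : X → X} (hPK : ∀ x, P x ∈ K)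
    (hP : ∀ x, ∀ z ∈ K, ⟪x - P x, z - P x⟫_ℝ ≤ 0) : LipschitzWith 1 P :=
  LipschitzWith.of_dist_le_mul fun x y => by
    simpa [dist_eq_norm] using norm_sub_le_of_inner_sub_le_zero (hP x _ (hPK y)) (hP y _ (hPK x))

theorem norm_sub_sub_smul_sub_sq_le {B : X → X} {c C ρ : ℝ}
    (hmono : ∀ u v, c * ‖u - v‖ ^ 2 ≤ ⟪B u - B v, u - v⟫_ℝ)
    (hlip : ∀ u v, ‖B u - B v‖ ≤ C * ‖u - v‖) (hρ : 0 ≤ ρ) (u v : X) :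
    ‖(u - v) - ρ • (B u - B v)‖ ^ 2 ≤ (1 - 2 * ρ * c + ρ ^ 2 * C ^ 2) * ‖u - v‖ ^ 2 := by
  have hlip_sq : ‖B u - B v‖ ^ 2 ≤ C ^ 2 * ‖u - v‖ ^ 2 := by
    rw [← mul_pow]; exact pow_le_pow_left₀ (norm_nonneg _) (hlip u v) 2
  rw [norm_sub_sq_real, real_inner_smul_right, norm_smul, Real.norm_eq_abs, abs_of_nonneg hρ,
    real_inner_comm, mul_pow]
  nlinarith [mul_le_mul_of_nonneg_left (hmono u v) hρ,
    mul_le_mul_of_nonneg_left hlip_sq (sq_nonneg ρ)]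

/-- The step size `ρ = c / (C² + c²)` gives the contraction constant `√(C² / (C² + c²))`. -/
theorem exists_lipschitzWith_sub_smul {B : X → X} {c C : ℝ} (hc : 0 < c)
    (hmono : ∀ u v, c * ‖u - v‖ ^ 2 ≤ ⟪B u - B v, u - v⟫_ℝ)
    (hlip : ∀ u v, ‖B u - B v‖ ≤ C * ‖u - v‖) :
    ∃ ρ : ℝ, 0 < ρ ∧ ∃ κ : NNReal, κ < 1 ∧ LipschitzWith κ fun x => x - ρ • B x := by
  have hS : 0 < C ^ 2 + c ^ 2 := by positivity
  have hκ : C ^ 2 / (C ^ 2 + c ^ 2) < 1 := (div_lt_one hS).2 (by linarith [sq_pos_of_pos hc])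
  obtain ⟨ρ, hρ⟩ : ∃ ρ : ℝ, ρ = c / (C ^ 2 + c ^ 2) := ⟨_, rfl⟩
  have hρ_pos : 0 < ρ := hρ ▸ by positivity
  refine ⟨ρ, hρ_pos, Real.toNNReal √(C ^ 2 / (C ^ 2 + c ^ 2)),
    Real.toNNReal_lt_one.2 ((Real.sqrt_lt' one_pos).2 (by simpa using hκ)), ?_⟩
  refine LipschitzWith.of_dist_le' fun x y => ?_
  have hcoef : 1 - 2 * ρ * c + ρ ^ 2 * C ^ 2
      = C ^ 2 / (C ^ 2 + c ^ 2) - (c ^ 2 / (C ^ 2 + c ^ 2)) ^ 2 := by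
    rw [hρ]; field_simp; ring
  rw [dist_eq_norm, dist_eq_norm, show x - ρ • B x - (y - ρ • B y) = (x - y) - ρ • (B x - B y) by
    module]
  refine (pow_le_pow_iff_left₀ (norm_nonneg _) (by positivity) two_ne_zero).1 ?_
  rw [mul_pow, Real.sq_sqrt (by positivity)]
  refine (norm_sub_sub_smul_sub_sq_le hmono hlip hρ_pos.le x y).trans ?_
  rw [hcoef]
  nlinarith [sq_nonneg (c ^ 2 / (C ^ 2 + c ^ 2)), sq_nonneg ‖x - y‖]

theorem eq_of_inner_sub_ge {K : Set X} {B : X → X} {c : ℝ} (hc : 0 < c)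
    (hmono : ∀ u v, c * ‖u - v‖ ^ 2 ≤ ⟪B u - B v, u - v⟫_ℝ) {f u₁ u₂ : X}
    (h₁ : u₁ ∈ K ∧ ∀ v ∈ K, ⟪B u₁, v - u₁⟫_ℝ ≥ ⟪f, v - u₁⟫_ℝ)
    (h₂ : u₂ ∈ K ∧ ∀ v ∈ K, ⟪B u₂, v - u₂⟫_ℝ ≥ ⟪f, v - u₂⟫_ℝ) : u₁ = u₂ := by
  have hu₁ := h₁.2 u₂ h₂.1
  have hu₂ := h₂.2 u₁ h₁.1
  rw [← neg_sub u₁ u₂, inner_neg_right, inner_neg_right] at hu₁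
  have hmono₁₂ := hmono u₁ u₂
  rw [inner_sub_left] at hmono₁₂
  have hnorm : ‖u₁ - u₂‖ ^ 2 ≤ 0 := by nlinarith
  exact sub_eq_zero.1 (norm_eq_zero.1 (pow_eq_zero_iff two_ne_zero |>.1
    (le_antisymm hnorm (sq_nonneg _))))

/-- The solution is the fixed point of the contraction `x ↦ P_K (x - ρ (B x - f))`, where `P_K` is
the metric projection onto `K`. -/
theorem lions_stampacchia [CompleteSpace X] {K : Set X} (hne : K.Nonempty) (hcl : IsClosed K)
    (hconv : Convex ℝ K) {B : X → X} {c C : ℝ} (hc : 0 < c)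
    (hmono : ∀ u v, c * ‖u - v‖ ^ 2 ≤ ⟪B u - B v, u - v⟫_ℝ)
    (hlip : ∀ u v, ‖B u - B v‖ ≤ C * ‖u - v‖) (f : X) :
    ∃! u, u ∈ K ∧ ∀ v ∈ K, ⟪B u, v - u⟫_ℝ ≥ ⟪f, v - u⟫_ℝ := by
  refine existsUnique_of_exists_of_unique ?_ fun u₁ u₂ h₁ h₂ => eq_of_inner_sub_ge hc hmono h₁ h₂
  choose P hPK hP using exists_inner_sub_le_zero_of_isClosed_convex hne hcl hconv
  obtain ⟨ρ, hρ, κ, hκ, hstep⟩ := exists_lipschitzWith_sub_smul (B := fun x => B x - f) hc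
    (by simpa only [sub_sub_sub_cancel_right] using hmono)
    (by simpa only [sub_sub_sub_cancel_right] using hlip)
  have hT : ContractingWith κ (P ∘ fun x => x - ρ • (B x - f)) :=
    ⟨hκ, by simpa using (lipschitzWith_one_of_inner_sub_le_zero hPK hP).comp hstep⟩
  set u := ContractingWith.fixedPoint _ hT
  have hu : P (u - ρ • (B u - f)) = u := hT.fixedPoint_isFixedPt
  refine ⟨u, hu ▸ hPK _, fun v hv => ?_⟩
  have hvi := hP (u - ρ • (B u - f)) v hv
  rw [hu, sub_sub_cancel_left, inner_neg_left, real_inner_smul_left, inner_sub_left] at hvi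
  nlinarith

theorem ExistsUnique.vi_congr {K : Set X} {B : X → X} {E : X → X → ℝ} {f : X}
    (hE : ∀ u ∈ K, ∀ v ∈ K, ⟪B u, v - u⟫_ℝ = E u v)
    (h : ∃! u, u ∈ K ∧ ∀ v ∈ K, ⟪B u, v - u⟫_ℝ ≥ ⟪f, v - u⟫_ℝ) :
    ∃! u, u ∈ K ∧ ∀ v ∈ K, E u v ≥ ⟪f, v - u⟫_ℝ :=
  (existsUnique_congr fun u => and_congr_right fun hu =>
    forall₂_congr fun v hv => by rw [hE u hu v hv]).1 h

theorem mem_orthogonal_of_inner_sub_nonneg {S : Submodule ℝ X} {u z : X} (hu : u ∈ S)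
    (h : ∀ v ∈ S, 0 ≤ ⟪z, v - u⟫_ℝ) : z ∈ Sᗮ := by
  refine (Submodule.mem_orthogonal S z).2 fun y hy => ?_
  have h_add := h (u + y) (S.add_mem hu hy)
  have h_sub := h (u - y) (S.sub_mem hu hy)
  rw [add_sub_cancel_left] at h_add
  rw [sub_sub_cancel_left, inner_neg_right] at h_sub
  rw [real_inner_comm]
  linarith

end VariationalInequality

theorem sub_mul_sub_le_of_abs_sub_le {p : ℝ → ℝ} {L : ℝ} (h : ∀ r s, |p r - p s| ≤ L * |r - s|)
    (r s : ℝ) : (p r - p s) * (r - s) ≤ L * (r - s) ^ 2 :=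
  calc (p r - p s) * (r - s) ≤ |p r - p s| * |r - s| := (le_abs_self _).trans (abs_mul _ _).le
    _ ≤ L * |r - s| * |r - s| := mul_le_mul_of_nonneg_right (h r s) (abs_nonneg _)
    _ = L * (r - s) ^ 2 := by rw [mul_assoc, abs_mul_abs_self, sq]

theorem antitone_of_sub_mul_sub_nonpos {q : ℝ → ℝ} (h : ∀ r s, (q r - q s) * (r - s) ≤ 0) :
    Antitone q := fun r s hrs => by
  rcases hrs.eq_or_lt with rfl | hlt
  · rfl
  · nlinarith [h r s]

theorem mul_sub_nonneg_of_antitone {q : ℝ → ℝ} {a : ℝ} (hq : Antitone q) (ha : q a = 0) (r : ℝ) :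
    0 ≤ q r * (a - r) := by
  rcases le_total r a with h | h
  · exact mul_nonneg (ha ▸ hq h) (sub_nonneg.2 h)
  · exact mul_nonneg_of_nonpos_of_nonpos (ha ▸ hq h) (sub_nonpos.2 h)

/-- For `s` outside `(b, a)` (resp. `(a, b)`), `q s * (a - s) ≥ q b * (a - b) > 0`. -/
theorem tendsto_of_tendsto_mul_sub_zero {q : ℝ → ℝ} {a : ℝ} (hq : Antitone q)
    (hq_zero : ∀ r, q r = 0 ↔ r = a) {ι : Type*} {F : Filter ι} {s : ι → ℝ}
    (h : Tendsto (fun i => q (s i) * (a - s i)) F (𝓝 0)) : Tendsto s F (𝓝 a) := by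
  have hqa : q a = 0 := (hq_zero a).2 rfl
  refine tendsto_order.2 ⟨fun b hb => ?_, fun b hb => ?_⟩
  · have hqb : 0 < q b := (hqa ▸ hq hb.le).lt_of_ne' fun h => hb.ne ((hq_zero b).1 h)
    filter_upwards [h.eventually (gt_mem_nhds (by nlinarith : 0 < q b * (a - b)))] with i hi
    by_contra! hsb
    nlinarith [hq hsb]
  · have hqb : q b < 0 := (hqa ▸ hq hb.le).lt_of_ne fun h => hb.ne' ((hq_zero b).1 h)
    filter_upwards [h.eventually (gt_mem_nhds (by nlinarith : 0 < q b * (a - b)))] with i hi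
    by_contra! hsb
    nlinarith [hq hsb]

theorem tendsto_zero_of_penalty_le {ι : Type*} {F : Filter ι} {lam g d e : ι → ℝ} {c β W : ℝ}
    (hc : 0 < c) (hW : 0 ≤ W) (he : ∀ i, 0 ≤ e i) (hlam : ∀ i, 0 < lam i)
    (hlam_lim : Tendsto lam F (𝓝 0)) (hg : ∀ i, 0 ≤ g i) (hd : ∀ i, |d i| ≤ W * e i)
    (hest : ∀ i, 1 / lam i * g i + c * e i ^ 2 ≤ β * d i) : Tendsto g F (𝓝 0) := by
  have hβd : ∀ i, β * d i ≤ |β| * W * e i := fun i =>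
    (le_abs_self _).trans <| by
      rw [abs_mul, mul_assoc]; exact mul_le_mul_of_nonneg_left (hd i) (abs_nonneg β)
  have hpen : ∀ i, 0 ≤ 1 / lam i * g i := fun i => mul_nonneg (one_div_pos.2 (hlam i)).le (hg i)
  have he_le : ∀ i, e i ≤ |β| * W / c := fun i => by
    rw [le_div_iff₀ hc]
    rcases (he i).eq_or_lt with h | h
    · rw [← h, zero_mul]; positivity
    · nlinarith [hest i, hβd i, hpen i]
  have hg_le : ∀ i, g i ≤ lam i * (|β| * W * (|β| * W / c)) := fun i => by
    have hlam_g : g i = lam i * (1 / lam i * g i) := by field_simp [(hlam i).ne']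
    rw [hlam_g]
    refine mul_le_mul_of_nonneg_left ?_ (hlam i).le
    nlinarith [hest i, hβd i, mul_le_mul_of_nonneg_left (he_le i) (by positivity : 0 ≤ |β| * W),
      sq_nonneg (e i)]
  exact squeeze_zero hg hg_le (by simpa using hlam_lim.mul_const (|β| * W * (|β| * W / c)))

theorem tendsto_of_sq_norm_sub_le {X : Type*} [NormedAddCommGroup X] {ι : Type*} {F : Filter ι}
    {x : ι → X} {y : X} {d : ι → ℝ} {c β : ℝ} (hc : 0 < c) (h : ∀ i, c * ‖x i - y‖ ^ 2 ≤ β * d i)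
    (hd : Tendsto d F (𝓝 0)) : Tendsto x F (𝓝 y) := by
  have hsq : Tendsto (fun i => ‖x i - y‖ ^ 2) F (𝓝 0) :=
    squeeze_zero (fun _ => sq_nonneg _) (fun i => (le_div_iff₀' hc).2 (h i))
      (by simpa using (hd.const_mul β).div_const c)
  rw [tendsto_iff_norm_sub_tendsto_zero]
  simpa using hsq.sqrt

section AffineConstraint

variable {X : Type*} [NormedAddCommGroup X] [InnerProductSpace ℝ X] {w : X} {a : ℝ}
  {θ : X → ℝ}

theorem inner_sub_eq_of_eq_sub_inner (hθ : ∀ v, θ v = a - ⟪w, v⟫_ℝ) (u v : X) :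
    ⟪w, u - v⟫_ℝ = θ v - θ u := by
  rw [inner_sub_right, hθ, hθ]; ring

theorem abs_sub_le_of_eq_sub_inner (hθ : ∀ v, θ v = a - ⟪w, v⟫_ℝ) (u v : X) :
    |θ u - θ v| ≤ ‖w‖ * ‖u - v‖ := by
  rw [abs_sub_comm, ← inner_sub_eq_of_eq_sub_inner hθ]
  exact abs_real_inner_le_norm w (u - v)

theorem sq_sub_le_of_eq_sub_inner (hθ : ∀ v, θ v = a - ⟪w, v⟫_ℝ) (u v : X) :
    (θ u - θ v) ^ 2 ≤ ‖w‖ ^ 2 * ‖u - v‖ ^ 2 := by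
  rw [← mul_pow, ← sq_abs]
  exact pow_le_pow_left₀ (abs_nonneg _) (abs_sub_le_of_eq_sub_inner hθ u v) 2

theorem setOf_eq_eq_orthogonal (hθ : ∀ v, θ v = a - ⟪w, v⟫_ℝ) :
    {v | θ v = a} = ((ℝ ∙ w)ᗮ : Set X) := by
  ext v
  simp [hθ, Submodule.mem_orthogonal_singleton_iff_inner_right]

theorem setOf_nonneg_eq_setOf_inner_le (hθ : ∀ v, θ v = a - ⟪w, v⟫_ℝ) :
    {v | θ v ≥ 0} = {v : X | ⟪w, v⟫_ℝ ≤ a} := by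
  ext v
  simp [hθ]

theorem strongly_monotone_add_smul {A : X → X} {m : ℝ}
    (hθ : ∀ v, θ v = a - ⟪w, v⟫_ℝ) (hA : ∀ u v, m * ‖u - v‖ ^ 2 ≤ ⟪A u - A v, u - v⟫_ℝ)
    {ψ : ℝ → ℝ} {L : ℝ} (hL : 0 ≤ L) (hψ : ∀ r s, (ψ r - ψ s) * (r - s) ≤ L * (r - s) ^ 2)
    (u v : X) :
    (m - L * ‖w‖ ^ 2) * ‖u - v‖ ^ 2
      ≤ ⟪(A u + ψ (θ u) • w) - (A v + ψ (θ v) • w), u - v⟫_ℝ := by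
  rw [show (A u + ψ (θ u) • w) - (A v + ψ (θ v) • w) = (A u - A v) + (ψ (θ u) - ψ (θ v)) • w by
    module, inner_add_left, real_inner_smul_left, inner_sub_eq_of_eq_sub_inner hθ]
  nlinarith [hA u v, hψ (θ u) (θ v),
    mul_le_mul_of_nonneg_left (sq_sub_le_of_eq_sub_inner hθ u v) hL]

theorem lipschitz_add_smul {A : X → X} {M : ℝ}
    (hθ : ∀ v, θ v = a - ⟪w, v⟫_ℝ) (hA : ∀ u v, ‖A u - A v‖ ≤ M * ‖u - v‖)
    {ψ : ℝ → ℝ} {L : ℝ} (hL : 0 ≤ L) (hψ : ∀ r s, |ψ r - ψ s| ≤ L * |r - s|) (u v : X) :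
    ‖(A u + ψ (θ u) • w) - (A v + ψ (θ v) • w)‖ ≤ (M + L * ‖w‖ ^ 2) * ‖u - v‖ := by
  rw [show (A u + ψ (θ u) • w) - (A v + ψ (θ v) • w) = (A u - A v) + (ψ (θ u) - ψ (θ v)) • w by
    module]
  calc _ ≤ ‖A u - A v‖ + |ψ (θ u) - ψ (θ v)| * ‖w‖ := by
        rw [← Real.norm_eq_abs, ← norm_smul]; exact norm_add_le _ _
    _ ≤ M * ‖u - v‖ + L * (‖w‖ * ‖u - v‖) * ‖w‖ :=
        add_le_add (hA u v) (mul_le_mul_of_nonneg_right ((hψ _ _).trans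
          (mul_le_mul_of_nonneg_left (abs_sub_le_of_eq_sub_inner hθ u v) hL)) (norm_nonneg w))
    _ = (M + L * ‖w‖ ^ 2) * ‖u - v‖ := by ring

end AffineConstraint

section SpringRods

variable {X : Type*} [NormedAddCommGroup X] [InnerProductSpace ℝ X] {w : X} {l : ℝ}
  {θ : X → ℝ} {A : X → X} {m : ℝ} {p : ℝ → ℝ} {Lp : ℝ} {j : X → X → ℝ}
  {q : ℝ → ℝ} {G : X → X}

theorem existsUnique_penalized_vi [CompleteSpace X] (hl : 0 ≤ l)
    (hθ : ∀ v, θ v = 2 * l - ⟪w, v⟫_ℝ) {K : Set X} (hK : K = {v | θ v ≥ 0}) {M : ℝ}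
    (hA_mono : ∀ u v, m * ‖u - v‖ ^ 2 ≤ ⟪A u - A v, u - v⟫_ℝ)
    (hA_lip : ∀ u v, ‖A u - A v‖ ≤ M * ‖u - v‖)
    (hLp : 0 ≤ Lp) (hp_lip : ∀ r s, |p r - p s| ≤ Lp * |r - s|) (hsmall : Lp * ‖w‖ ^ 2 < m)
    (hj : ∀ u v, j u v = -(p (θ u)) * θ v) {Lq : ℝ} (hLq : 0 ≤ Lq)
    (hq_lip : ∀ r s, |q r - q s| ≤ Lq * |r - s|) (hq_mono : ∀ r s, (q r - q s) * (r - s) ≤ 0)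
    (hG : ∀ u, G u = q (θ u) • w) {k : ℝ} (hk : 0 ≤ k) (f : X) :
    ∃! u, u ∈ K ∧ ∀ v ∈ K,
      ⟪A u, v - u⟫_ℝ + k * ⟪G u, v - u⟫_ℝ + j u v - j u u ≥ ⟪f, v - u⟫_ℝ := by
  rw [setOf_nonneg_eq_setOf_inner_le hθ] at hK
  subst hK
  have hψ_mono (r s : ℝ) :
      (k * q r + p r - (k * q s + p s)) * (r - s) ≤ Lp * (r - s) ^ 2 := by
    nlinarith [mul_nonneg hk (neg_nonneg.2 (hq_mono r s)), sub_mul_sub_le_of_abs_sub_le hp_lip r s]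
  have hψ_lip (r s : ℝ) : |k * q r + p r - (k * q s + p s)| ≤ (k * Lq + Lp) * |r - s| :=
    calc _ = |k * (q r - q s) + (p r - p s)| := by ring_nf
      _ ≤ k * |q r - q s| + |p r - p s| := by
        rw [← abs_of_nonneg hk, ← abs_mul, abs_of_nonneg hk]; exact abs_add_le _ _
      _ ≤ (k * Lq + Lp) * |r - s| := by
        nlinarith [mul_le_mul_of_nonneg_left (hq_lip r s) hk, hp_lip r s]
  refine ExistsUnique.vi_congr (B := fun u => A u + (k * q (θ u) + p (θ u)) • w)
    (fun u _ v _ => ?_) (lions_stampacchia ⟨0, by simpa using hl⟩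
      (isClosed_le (continuous_const.inner continuous_id) continuous_const)
      (convex_halfSpace_le (innerₛₗ ℝ w).isLinear _) (sub_pos.2 hsmall)
      (strongly_monotone_add_smul hθ hA_mono hLp hψ_mono)
      (lipschitz_add_smul hθ hA_lip (by positivity) hψ_lip) f)
  rw [inner_add_left, real_inner_smul_left, hG, real_inner_smul_left, hj, hj,
    inner_sub_eq_of_eq_sub_inner hθ]
  ring

theorem existsUnique_rigid_vi [CompleteSpace X] (hθ : ∀ v, θ v = 2 * l - ⟪w, v⟫_ℝ)
    {K''' : Set X} (hK''' : K''' = {v | θ v = 2 * l}) {M : ℝ} (hm : 0 < m)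
    (hA_mono : ∀ u v, m * ‖u - v‖ ^ 2 ≤ ⟪A u - A v, u - v⟫_ℝ)
    (hA_lip : ∀ u v, ‖A u - A v‖ ≤ M * ‖u - v‖) (hj : ∀ u v, j u v = -(p (θ u)) * θ v)
    (f : X) :
    ∃! u', u' ∈ K''' ∧ ∀ v ∈ K''', ⟪A u', v - u'⟫_ℝ + j u' v - j u' u' ≥ ⟪f, v - u'⟫_ℝ := by
  refine ExistsUnique.vi_congr (B := A) (fun u hu v hv => ?_) <| lions_stampacchia ⟨0, ?_⟩
    (hK''' ▸ setOf_eq_eq_orthogonal hθ ▸ Submodule.isClosed_orthogonal _)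
    (hK''' ▸ setOf_eq_eq_orthogonal hθ ▸ Submodule.convex _) hm hA_mono hA_lip f
  · rw [hK'''] at hu hv
    rw [hj, hj, hv.trans hu.symm]
    ring
  · simp [hK''', hθ]

theorem penalized_energy_estimate (hθ : ∀ v, θ v = 2 * l - ⟪w, v⟫_ℝ)
    (hA_mono : ∀ u v, m * ‖u - v‖ ^ 2 ≤ ⟪A u - A v, u - v⟫_ℝ)
    (hLp : 0 ≤ Lp) (hp_lip : ∀ r s, |p r - p s| ≤ Lp * |r - s|)
    (hj : ∀ u v, j u v = -(p (θ u)) * θ v) (hG : ∀ u, G u = q (θ u) • w)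
    {f u u' : X} {α k : ℝ} (hz : α • w = A u' - f)
    (hvi : ⟪A u, u' - u⟫_ℝ + k * ⟪G u, u' - u⟫_ℝ + j u u' - j u u ≥ ⟪f, u' - u⟫_ℝ) :
    k * (q (θ u) * (θ u' - θ u)) + (m - Lp * ‖w‖ ^ 2) * ‖u - u'‖ ^ 2
      ≤ (α + p (θ u')) * (θ u - θ u') := by
  have hAu : ⟪A u - f, u' - u⟫_ℝ = -⟪A u - A u', u - u'⟫_ℝ + α * (θ u - θ u') := by
    rw [show A u - f = (A u - A u') + α • w by rw [hz]; abel, inner_add_left,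
      real_inner_smul_left, inner_sub_eq_of_eq_sub_inner hθ, ← neg_sub u u', inner_neg_right]
  rw [hG, real_inner_smul_left, inner_sub_eq_of_eq_sub_inner hθ, hj, hj] at hvi
  rw [inner_sub_left] at hAu
  nlinarith [hA_mono u u', sub_mul_sub_le_of_abs_sub_le hp_lip (θ u) (θ u'),
    mul_le_mul_of_nonneg_left (sq_sub_le_of_eq_sub_inner hθ u u') hLp]

theorem tendsto_penalized_solution (hl : 0 ≤ l) (hθ : ∀ v, θ v = 2 * l - ⟪w, v⟫_ℝ)
    {K K''' : Set X} (hK : K = {v | θ v ≥ 0}) (hK''' : K''' = {v | θ v = 2 * l})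
    (hA_mono : ∀ u v, m * ‖u - v‖ ^ 2 ≤ ⟪A u - A v, u - v⟫_ℝ)
    (hLp : 0 ≤ Lp) (hp_lip : ∀ r s, |p r - p s| ≤ Lp * |r - s|) (hsmall : Lp * ‖w‖ ^ 2 < m)
    (hj : ∀ u v, j u v = -(p (θ u)) * θ v) (hq_anti : Antitone q)
    (hq_zero : ∀ r, q r = 0 ↔ r = 2 * l) (hG : ∀ u, G u = q (θ u) • w) {f : X}
    {lam : ℕ → ℝ} (hlam_pos : ∀ n, 0 < lam n) (hlam_lim : Tendsto lam atTop (𝓝 0))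
    {un : ℕ → X} {u' : X}
    (hun : ∀ n, un n ∈ K ∧ ∀ v ∈ K,
      ⟪A (un n), v - un n⟫_ℝ + (1 / lam n) * ⟪G (un n), v - un n⟫_ℝ
        + j (un n) v - j (un n) (un n) ≥ ⟪f, v - un n⟫_ℝ)
    (hu' : u' ∈ K''' ∧ ∀ v ∈ K''', ⟪A u', v - u'⟫_ℝ + j u' v - j u' u' ≥ ⟪f, v - u'⟫_ℝ) :
    Tendsto un atTop (𝓝 u') := by
  obtain ⟨hu'K''', hu'_vi⟩ := hu'
  have hθu' : θ u' = 2 * l := by rw [hK'''] at hu'K'''; exact hu'K'''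
  have hu'K : u' ∈ K := by rw [hK]; show θ u' ≥ 0; linarith
  have hz : ∀ v ∈ K''', 0 ≤ ⟪A u' - f, v - u'⟫_ℝ := fun v hv => by
    have hv_vi := hu'_vi v hv
    rw [hK'''] at hv
    rw [hj, hj, show θ v = θ u' from hv.trans hθu'.symm] at hv_vi
    rw [inner_sub_left]
    linarith
  obtain ⟨α, hα⟩ : ∃ α : ℝ, α • w = A u' - f := by
    rw [hK''', setOf_eq_eq_orthogonal hθ] at hz hu'K'''
    rw [← Submodule.mem_span_singleton, ← Submodule.orthogonal_orthogonal (ℝ ∙ w)]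
    exact mem_orthogonal_of_inner_sub_nonneg hu'K''' hz
  have hest (n : ℕ) := penalized_energy_estimate hθ hA_mono hLp hp_lip hj hG hα ((hun n).2 u' hu'K)
  simp only [hθu'] at hest
  have hpen_nonneg (n : ℕ) := mul_sub_nonneg_of_antitone hq_anti ((hq_zero _).2 rfl) (θ (un n))
  have hpen := tendsto_zero_of_penalty_le (sub_pos.2 hsmall) (norm_nonneg w)
    (fun n => norm_nonneg (un n - u')) hlam_pos hlam_lim hpen_nonneg
    (fun n => hθu' ▸ abs_sub_le_of_eq_sub_inner hθ (un n) u') hest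
  have hθ_lim := tendsto_of_tendsto_mul_sub_zero hq_anti hq_zero hpen
  refine tendsto_of_sq_norm_sub_le (β := α + p (2 * l)) (sub_pos.2 hsmall) (fun n => ?_)
    (by simpa using hθ_lim.sub_const (2 * l))
  nlinarith [hest n, hpen_nonneg n, one_div_pos.2 (hlam_pos n)]

end SpringRods

theorem spring_rods_convergence_rigid_both_general
    {X : Type*} [NormedAddCommGroup X] [InnerProductSpace ℝ X] [CompleteSpace X]
    (w : X) (l : ℝ) (hl : 0 < l)
    (θ : X → ℝ) (hθ : ∀ v : X, θ v = 2 * l - ⟪w, v⟫_ℝ)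
    (K K''' : Set X)
    (hK : K = {v : X | θ v ≥ 0}) (hK''' : K''' = {v : X | θ v = 2 * l})
    (A : X → X) (m M : ℝ) (hm : 0 < m)
    (hA_mono : ∀ u v : X, m * ‖u - v‖ ^ 2 ≤ ⟪A u - A v, u - v⟫_ℝ)
    (hA_lip : ∀ u v : X, ‖A u - A v‖ ≤ M * ‖u - v‖)
    (p : ℝ → ℝ) (Lp : ℝ) (hLp : 0 < Lp)
    (hp_lip : ∀ r s : ℝ, |p r - p s| ≤ Lp * |r - s|)
    (hsmall : Lp * ‖w‖ ^ 2 < m)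
    (j : X → X → ℝ) (hj : ∀ u v : X, j u v = -(p (θ u)) * θ v)
    (q : ℝ → ℝ)
    (hq_lip : ∃ Lq : ℝ, 0 < Lq ∧ ∀ r s : ℝ, |q r - q s| ≤ Lq * |r - s|)
    (hq_mono : ∀ r s : ℝ, (q r - q s) * (r - s) ≤ 0)
    (hq_zero : ∀ r : ℝ, q r = 0 ↔ r = 2 * l)
    (G : X → X) (hG : ∀ u : X, G u = q (θ u) • w)
    (f : X) (lam : ℕ → ℝ) (hlam_pos : ∀ n, 0 < lam n)
    (hlam_lim : Tendsto lam atTop (nhds 0)) :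
    (∀ n : ℕ, ∃! u : X, u ∈ K ∧ ∀ v ∈ K,
      ⟪A u, v - u⟫_ℝ + (1 / lam n) * ⟪G u, v - u⟫_ℝ + j u v - j u u
        ≥ ⟪f, v - u⟫_ℝ) ∧
    (∃! u' : X, u' ∈ K''' ∧ ∀ v ∈ K''',
      ⟪A u', v - u'⟫_ℝ + j u' v - j u' u' ≥ ⟪f, v - u'⟫_ℝ) ∧
    (∀ (un : ℕ → X) (u' : X),
      (∀ n : ℕ, un n ∈ K ∧ ∀ v ∈ K,
        ⟪A (un n), v - un n⟫_ℝ + (1 / lam n) * ⟪G (un n), v - un n⟫_ℝ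
          + j (un n) v - j (un n) (un n) ≥ ⟪f, v - un n⟫_ℝ) →
      (u' ∈ K''' ∧ ∀ v ∈ K''',
        ⟪A u', v - u'⟫_ℝ + j u' v - j u' u' ≥ ⟪f, v - u'⟫_ℝ) →
      Tendsto un atTop (nhds u')) := by
  obtain ⟨Lq, hLq, hq_lip⟩ := hq_lip
  refine ⟨fun n => ?_, existsUnique_rigid_vi hθ hK''' hm hA_mono hA_lip hj f,
    fun un u' hun hu' => ?_⟩
  · exact existsUnique_penalized_vi hl.le hθ hK hA_mono hA_lip hLp.le hp_lip hsmall hj hLq.le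
      hq_lip hq_mono hG (one_div_pos.2 (hlam_pos n)).le f
  · exact tendsto_penalized_solution hl.le hθ hK hK''' hA_mono hLp.le hp_lip hsmall hj
      (antitone_of_sub_mul_sub_nonpos hq_mono) hq_zero hG hlam_pos hlam_lim hun hu'

theorem spring_rods_convergence_rigid_both
    {X : Type*} [NormedAddCommGroup X] [InnerProductSpace ℝ X] [CompleteSpace X]
    (w : X) (l : ℝ) (hl : 0 < l)
    (θ : X → ℝ) (hθ : ∀ v : X, θ v = 2 * l - ⟪w, v⟫_ℝ)
    (K K''' : Set X)
    (hK : K = {v : X | θ v ≥ 0}) (hK''' : K''' = {v : X | θ v = 2 * l})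
    (A : X → X) (m M : ℝ) (hm : 0 < m) (hM : 0 < M)
    (hA_mono : ∀ u v : X, m * ‖u - v‖ ^ 2 ≤ ⟪A u - A v, u - v⟫_ℝ)
    (hA_lip : ∀ u v : X, ‖A u - A v‖ ≤ M * ‖u - v‖)
    (p : ℝ → ℝ) (Lp : ℝ) (hLp : 0 < Lp)
    (hp_lip : ∀ r s : ℝ, |p r - p s| ≤ Lp * |r - s|)
    (hsmall : Lp * ‖w‖ ^ 2 < m)
    (j : X → X → ℝ) (hj : ∀ u v : X, j u v = -(p (θ u)) * θ v)
    (q : ℝ → ℝ)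
    (hq_lip : ∃ Lq : ℝ, 0 < Lq ∧ ∀ r s : ℝ, |q r - q s| ≤ Lq * |r - s|)
    (hq_mono : ∀ r s : ℝ, (q r - q s) * (r - s) ≤ 0)
    (hq_nonneg : ∀ r : ℝ, r ≤ 2 * l → 0 ≤ q r)
    (hq_nonpos : ∀ r : ℝ, 2 * l ≤ r → q r ≤ 0)
    (hq_zero : ∀ r : ℝ, q r = 0 ↔ r = 2 * l)
    (G : X → X) (hG : ∀ u : X, G u = q (θ u) • w)
    (f : X) (lam : ℕ → ℝ) (hlam_pos : ∀ n, 0 < lam n)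
    (hlam_lim : Tendsto lam atTop (nhds 0)) :
    (∀ n : ℕ, ∃! u : X, u ∈ K ∧ ∀ v ∈ K,
      ⟪A u, v - u⟫_ℝ + (1 / lam n) * ⟪G u, v - u⟫_ℝ + j u v - j u u
        ≥ ⟪f, v - u⟫_ℝ) ∧
    (∃! u' : X, u' ∈ K''' ∧ ∀ v ∈ K''',
      ⟪A u', v - u'⟫_ℝ + j u' v - j u' u' ≥ ⟪f, v - u'⟫_ℝ) ∧
    (∀ (un : ℕ → X) (u' : X),
      (∀ n : ℕ, un n ∈ K ∧ ∀ v ∈ K,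
        ⟪A (un n), v - un n⟫_ℝ + (1 / lam n) * ⟪G (un n), v - un n⟫_ℝ
          + j (un n) v - j (un n) (un n) ≥ ⟪f, v - un n⟫_ℝ) →
      (u' ∈ K''' ∧ ∀ v ∈ K''',
        ⟪A u', v - u'⟫_ℝ + j u' v - j u' u' ≥ ⟪f, v - u'⟫_ℝ) →
      Tendsto un atTop (nhds u')) :=
  spring_rods_convergence_rigid_both_general w l hl θ hθ K K''' hK hK''' A m M hm hA_mono hA_lip p
    Lp hLp hp_lip hsmall j hj q hq_lip hq_mono hq_zero G hG f lam hlam_pos hlam_lim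
end

section
/- Let X be a real Hilbert space, w ∈ X, l > 0, and define θ : X → ℝ by θ(v) = 2l − (w, v)_X; set K = {v ∈ X : θ(v) ≥ 0}. Let k₁, k₂ > 0, define p : ℝ → ℝ by p(r) = −k₁(r − 2l) if r < 2l and p(r) = −k₂(r − 2l) if r ≥ 2l, and p̂ : ℝ → ℝ by p̂(r) = (k₁/2)(r − 2l)² if r < 2l and p̂(r) = (k₂/2)(r − 2l)² if r ≥ 2l; set j(u, v) = −p(θ(u)) θ(v) and φ(v) = p̂(θ(v)). Let A : X → X satisfy (Au − Av, u − v)_X ≥ m‖u − v‖_X² and ‖Au − Av‖_X ≤ M‖u − v‖_X for all u, v ∈ X with m, M > 0, assume m > max(k₁, k₂)‖w‖_X², and let f ∈ X. Then for u ∈ K the following are equivalent: (i) (Au, v − u)_X + j(u, v) − j(u, u) ≥ (f, v − u)_X for all v ∈ K; (ii) (Au, v − u)_X + φ(v) − φ(u) ≥ (f, v − u)_X for all v ∈ K. -/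
open scoped InnerProductSpace
open Set ContinuousLinearMap

/-!
The potential `p̂ = piecewiseQuad k₁ k₂ (2 * l)` is convex and differentiable with `p̂' = -p`
(the one-sided derivatives at the kink `2 * l` both vanish). Hence `φ = p̂ ∘ θ` is differentiable
with `φ'(u) (v - u) = j(u, v) - j(u, u)`, and it lies above its tangent planes. With
`F v = (A u - f, v) + φ v`, (ii) says that `u` minimizes `F` on the convex set `K`, and (i) is the
first-order condition `F'(u) (v - u) ≥ 0`. The tangent-plane inequality gives (i) ⇒ (ii), and
Fermat's rule along the segments `[u, v] ⊆ K` gives (ii) ⇒ (i).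
-/

noncomputable def piecewiseQuad (k₁ k₂ c x : ℝ) : ℝ :=
  if x < c then k₁ / 2 * (x - c) ^ 2 else k₂ / 2 * (x - c) ^ 2

noncomputable def piecewiseLin (k₁ k₂ c x : ℝ) : ℝ :=
  if x < c then k₁ * (x - c) else k₂ * (x - c)

lemma hasDerivAt_half_mul_sub_sq (k c x : ℝ) :
    HasDerivAt (fun y => k / 2 * (y - c) ^ 2) (k * (x - c)) x := by
  refine ((((hasDerivAt_id' x).sub_const c).fun_pow 2).const_mul (k / 2)).congr_deriv ?_
  norm_num
  ring

lemma hasDerivAt_piecewiseQuad (k₁ k₂ c x : ℝ) :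
    HasDerivAt (piecewiseQuad k₁ k₂ c) (piecewiseLin k₁ k₂ c x) x := by
  rcases lt_trichotomy x c with hx | rfl | hx
  · rw [piecewiseLin, if_pos hx]
    refine (hasDerivAt_half_mul_sub_sq k₁ c x).congr_of_eventuallyEq ?_
    filter_upwards [Iio_mem_nhds hx] with y hy using if_pos hy
  · rw [piecewiseLin, if_neg (lt_irrefl x), sub_self, mul_zero]
    have hleft : HasDerivWithinAt (piecewiseQuad k₁ k₂ x) 0 (Iic x) x := by
      refine ((hasDerivAt_half_mul_sub_sq k₁ x x).hasDerivWithinAt.congr (fun y hy => ?_) ?_)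
        |>.congr_deriv (by ring)
      · rcases (mem_Iic.1 hy).lt_or_eq with hy | rfl
        · exact if_pos hy
        · simp [piecewiseQuad]
      · simp [piecewiseQuad]
    have hright : HasDerivWithinAt (piecewiseQuad k₁ k₂ x) 0 (Ici x) x :=
      ((hasDerivAt_half_mul_sub_sq k₂ x x).hasDerivWithinAt.congr
        (fun y hy => if_neg (not_lt.2 (mem_Ici.1 hy))) (if_neg (lt_irrefl x))).congr_deriv (by ring)
    simpa [Iic_union_Ici] using hleft.union hright
  · rw [piecewiseLin, if_neg hx.not_gt]
    refine (hasDerivAt_half_mul_sub_sq k₂ c x).congr_of_eventuallyEq ?_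
    filter_upwards [Ioi_mem_nhds hx] with y hy using if_neg (not_lt.2 hy.le)

lemma piecewiseLin_mul_sub_le {k₁ k₂ : ℝ} (hk₁ : 0 ≤ k₁) (hk₂ : 0 ≤ k₂) (c x y : ℝ) :
    piecewiseLin k₁ k₂ c x * (y - x) ≤ piecewiseQuad k₁ k₂ c y - piecewiseQuad k₁ k₂ c x := by
  unfold piecewiseLin piecewiseQuad
  split_ifs <;>
    nlinarith [mul_nonneg hk₁ (sq_nonneg (y - x)), mul_nonneg hk₂ (sq_nonneg (y - x)),
      mul_nonneg hk₁ (sq_nonneg (x - c)), mul_nonneg hk₂ (sq_nonneg (y - c)),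
      mul_nonneg hk₁ (sq_nonneg (y - c)), mul_nonneg hk₂ (sq_nonneg (x - c))]

theorem forall_add_fderiv_nonneg_iff_forall_add_sub_nonneg
    {E : Type*} [NormedAddCommGroup E] [NormedSpace ℝ E] {K : Set E} (hK : Convex ℝ K) {u : E} (hu : u ∈ K) (ℓ : E →L[ℝ] ℝ) {φ : E → ℝ}
    {φ' : E →L[ℝ] ℝ} (hφ : HasFDerivAt φ φ' u) (hsub : ∀ v, φ' (v - u) ≤ φ v - φ u) :
    (∀ v ∈ K, 0 ≤ ℓ (v - u) + φ' (v - u)) ↔ ∀ v ∈ K, 0 ≤ ℓ (v - u) + (φ v - φ u) := by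
  refine ⟨fun h v hv => (h v hv).trans (by linarith [hsub v]), fun h v hv => ?_⟩
  have hmin : IsMinOn (fun x => ℓ x + φ x) K u :=
    isMinOn_iff.2 fun x hx => by linarith [h x hx, map_sub ℓ x u]
  simpa using hmin.localize.hasFDerivWithinAt_nonneg (ℓ.hasFDerivAt.add hφ).hasFDerivWithinAt
    (sub_mem_posTangentConeAt_of_segment_subset (hK.segment_subset hu hv))

theorem quasivariational_iff_variational_general
    {X : Type*} [NormedAddCommGroup X] [InnerProductSpace ℝ X]
    (w : X) (l : ℝ)
    (θ : X → ℝ) (hθ : ∀ v : X, θ v = 2 * l - ⟪w, v⟫_ℝ)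
    (K : Set X) (hK : K = {v : X | θ v ≥ 0})
    (k₁ k₂ : ℝ) (hk₁ : 0 < k₁) (hk₂ : 0 < k₂)
    (p phat : ℝ → ℝ)
    (hp : ∀ r : ℝ, p r = if r < 2 * l then -k₁ * (r - 2 * l) else -k₂ * (r - 2 * l))
    (hphat : ∀ r : ℝ,
      phat r = if r < 2 * l then k₁ / 2 * (r - 2 * l) ^ 2 else k₂ / 2 * (r - 2 * l) ^ 2)
    (j : X → X → ℝ) (hj : ∀ u v : X, j u v = -(p (θ u)) * θ v)
    (φ : X → ℝ) (hφ : ∀ v : X, φ v = phat (θ v))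
    (A : X → X)
    (f : X) (u : X) (hu : u ∈ K) :
    (∀ v ∈ K, ⟪A u, v - u⟫_ℝ + j u v - j u u ≥ ⟪f, v - u⟫_ℝ) ↔
    (∀ v ∈ K, ⟪A u, v - u⟫_ℝ + φ v - φ u ≥ ⟪f, v - u⟫_ℝ) := by
  have hK_conv : Convex ℝ K := by
    have : K = {v | ⟪w, v⟫_ℝ ≤ 2 * l} := by ext v; simp [hK, hθ]
    exact this ▸ convex_halfSpace_le (innerₛₗ ℝ w).isLinear _
  have hφ_eq : φ = piecewiseQuad k₁ k₂ (2 * l) ∘ θ := funext fun v => by rw [hφ, hphat]; rfl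
  set s := piecewiseLin k₁ k₂ (2 * l) (θ u)
  have hφ_deriv : HasFDerivAt φ (s • -innerSL ℝ w) u := by
    rw [hφ_eq, funext hθ]
    exact (hasDerivAt_piecewiseQuad k₁ k₂ (2 * l) (θ u)).comp_hasFDerivAt_of_eq u
      ((innerSL ℝ w).hasFDerivAt.const_sub _) (hθ u)
  have hθ_sub : ∀ v, θ v - θ u = -⟪w, v - u⟫_ℝ := fun v => by
    rw [hθ, hθ, inner_sub_right]; ring
  have hj_sub : ∀ v, j u v - j u u = s * -⟪w, v - u⟫_ℝ := fun v => by
    rw [← hθ_sub, hj, hj, hp]; simp only [s, piecewiseLin]; split_ifs <;> ring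
  have hφ_sub : ∀ v, (s • -innerSL ℝ w) (v - u) ≤ φ v - φ u := fun v => by
    simpa [hφ_eq, hθ_sub] using piecewiseLin_mul_sub_le hk₁.le hk₂.le (2 * l) (θ u) (θ v)
  have key := forall_add_fderiv_nonneg_iff_forall_add_sub_nonneg hK_conv hu (innerSL ℝ (A u - f)) hφ_deriv hφ_sub
  refine (forall₂_congr fun v _ => ?_).trans (key.trans (forall₂_congr fun v _ => ?_)) <;>
    simp only [innerSL_apply_apply, smul_apply, neg_apply, smul_eq_mul, inner_sub_left] <;>
    constructor <;> intro <;> linarith [hj_sub v]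

theorem quasivariational_iff_variational
    {X : Type*} [NormedAddCommGroup X] [InnerProductSpace ℝ X] [CompleteSpace X]
    (w : X) (l : ℝ) (hl : 0 < l)
    (θ : X → ℝ) (hθ : ∀ v : X, θ v = 2 * l - ⟪w, v⟫_ℝ)
    (K : Set X) (hK : K = {v : X | θ v ≥ 0})
    (k₁ k₂ : ℝ) (hk₁ : 0 < k₁) (hk₂ : 0 < k₂)
    (p phat : ℝ → ℝ)
    (hp : ∀ r : ℝ, p r = if r < 2 * l then -k₁ * (r - 2 * l) else -k₂ * (r - 2 * l))
    (hphat : ∀ r : ℝ,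
      phat r = if r < 2 * l then k₁ / 2 * (r - 2 * l) ^ 2 else k₂ / 2 * (r - 2 * l) ^ 2)
    (j : X → X → ℝ) (hj : ∀ u v : X, j u v = -(p (θ u)) * θ v)
    (φ : X → ℝ) (hφ : ∀ v : X, φ v = phat (θ v))
    (A : X → X) (m M : ℝ) (hm : 0 < m) (hM : 0 < M)
    (hA_mono : ∀ u v : X, m * ‖u - v‖ ^ 2 ≤ ⟪A u - A v, u - v⟫_ℝ)
    (hA_lip : ∀ u v : X, ‖A u - A v‖ ≤ M * ‖u - v‖)
    (hsmall : max k₁ k₂ * ‖w‖ ^ 2 < m)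
    (f : X) (u : X) (hu : u ∈ K) :
    (∀ v ∈ K, ⟪A u, v - u⟫_ℝ + j u v - j u u ≥ ⟪f, v - u⟫_ℝ) ↔
    (∀ v ∈ K, ⟪A u, v - u⟫_ℝ + φ v - φ u ≥ ⟪f, v - u⟫_ℝ) :=
  quasivariational_iff_variational_general w l θ hθ K hK k₁ k₂ hk₁ hk₂ p phat hp hphat j hj φ hφ A f
    u hu
end
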